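/- arXiv:2010.03075 — 3 statements merged into one kernel-verified Lean document; each statement's English description precedes it below -/
import Mathlib

section
/- For any matrix-valued signal f in L²(a,b; ℂ^{N×N}) and any two constant matrices A, B ∈ ℂ^{N×N}, the two matrix-valued signals A·f and B·f are linearly dependent (i.e., they are not linearly independent). -/
/-
Two `N × N` matrix equations `C A + D B = 0` in the `2N²` unknown entries of `C, D` cut out
only `N²` linear conditions, so they have a solution `(C, D) ≠ 0`. For it the combination
`C (A f) + D (B f)` vanishes identically, hence so does its Gram matrix; the zero matrix is
degenerate and its null space is everything, so linear independence would force
`Cᴴ = Dᴴ = 0`.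
-/

open MeasureTheory Matrix
open scoped ComplexOrder

noncomputable section

/-- The open interval `(a, b)` in `ℝ` with extended-real endpoints. -/
def ival (a b : EReal) : Set ℝ := {t : ℝ | a < (t : EReal) ∧ (t : EReal) < b}

/-- `f` is a matrix-valued signal in `L²(a,b; ℂ^{N×N})`: each of its `N²`
entry functions is in `L²(a,b)`. -/
def IsSignal {N : ℕ} (a b : EReal) (f : ℝ → Matrix (Fin N) (Fin N) ℂ) : Prop :=
  ∀ k l : Fin N, MemLp (fun t => f t k l) 2 (volume.restrict (ival a b))

/-- The matrix-valued inner product `⟨f,g⟩ = ∫ₐᵇ f(t) g(t)† dt`, defined entrywise. -/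
def mvInner {N : ℕ} (a b : EReal) (f g : ℝ → Matrix (Fin N) (Fin N) ℂ) :
    Matrix (Fin N) (Fin N) ℂ :=
  Matrix.of fun k l => ∫ t in ival a b, (f t * (g t)ᴴ) k l

/-- The Frobenius norm of an `N × N` complex matrix. -/
def frobNorm {N : ℕ} (A : Matrix (Fin N) (Fin N) ℂ) : ℝ :=
  Real.sqrt (∑ k, ∑ l, ‖A k l‖ ^ 2)

/-- Linear independence of matrix-valued signals: whenever `f := ∑ k, F k * f k`
is degenerate (i.e. `⟨f,f⟩` is not invertible), the null space of `(F k)ᴴ`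
contains the null space of `⟨f,f⟩`, for every `k`. -/
def LinIndep {N K : ℕ} (a b : EReal) (f : Fin K → ℝ → Matrix (Fin N) (Fin N) ℂ) : Prop :=
  ∀ F : Fin K → Matrix (Fin N) (Fin N) ℂ,
    ¬ IsUnit (mvInner a b (fun t => ∑ k, F k * f k t) (fun t => ∑ k, F k * f k t)) →
    ∀ (k : Fin K) (u : Fin N → ℂ),
      (mvInner a b (fun t => ∑ j, F j * f j t) (fun t => ∑ j, F j * f j t)).mulVec u = 0 →
      ((F k)ᴴ).mulVec u = 0

namespace Matrix

theorem exists_ne_zero_mul_add_mul_eq_zero {n K : Type*} [Fintype n] [DecidableEq n]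
    [Nonempty n] [Field K] (A B : Matrix n n K) :
    ∃ C D : Matrix n n K, (C, D) ≠ 0 ∧ C * A + D * B = 0 := by
  let L : Matrix n n K × Matrix n n K →ₗ[K] Matrix n n K :=
    (LinearMap.mulRight K A).coprod (LinearMap.mulRight K B)
  have hdim : Module.finrank K (Matrix n n K) <
      Module.finrank K (Matrix n n K × Matrix n n K) := by
    have : 0 < Fintype.card n := Fintype.card_pos
    simp only [Module.finrank_prod, Module.finrank_matrix, Module.finrank_self, mul_one]
    nlinarith
  obtain ⟨⟨C, D⟩, hker, hne⟩ := Submodule.exists_mem_ne_zero_of_ne_bot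
    (LinearMap.ker_ne_bot_of_finrank_lt (f := L) hdim)
  exact ⟨C, D, hne, hker⟩

end Matrix

theorem mvInner_zero_left {N : ℕ} (a b : EReal) (g : ℝ → Matrix (Fin N) (Fin N) ℂ) :
    mvInner a b (fun _ => 0) g = 0 := by
  ext k l
  simp [mvInner]

theorem not_linIndep_of_sum_eq_zero {N K : ℕ} [NeZero N] {a b : EReal}
    {f : Fin K → ℝ → Matrix (Fin N) (Fin N) ℂ} {F : Fin K → Matrix (Fin N) (Fin N) ℂ}
    (hF : F ≠ 0) (hsum : ∀ t, ∑ k, F k * f k t = 0) :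
    ¬ LinIndep a b f := by
  intro h
  have hgram : mvInner a b (fun t => ∑ k, F k * f k t) (fun t => ∑ k, F k * f k t) = 0 := by
    simp only [hsum, mvInner_zero_left]
  have hdegenerate : ¬ IsUnit (0 : Matrix (Fin N) (Fin N) ℂ) := not_isUnit_zero
  refine hF (funext fun k => ?_)
  rw [Pi.zero_apply, ← conjTranspose_eq_zero, ext_iff_mulVec]
  intro u
  rw [zero_mulVec]
  exact h F (hgram ▸ hdegenerate) k u (by rw [hgram, zero_mulVec])

theorem stmt_5_general {N : ℕ} (hN : 1 ≤ N) (a b : EReal)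
    (f : ℝ → Matrix (Fin N) (Fin N) ℂ)
    (A B : Matrix (Fin N) (Fin N) ℂ) :
    ¬ LinIndep a b ![fun t => A * f t, fun t => B * f t] := by
  have : NeZero N := ⟨by omega⟩
  obtain ⟨C, D, hCD, hcomb⟩ := exists_ne_zero_mul_add_mul_eq_zero A B
  refine not_linIndep_of_sum_eq_zero (F := ![C, D]) ?_ fun t => ?_
  · intro hF
    exact hCD (Prod.ext (congrFun hF 0) (congrFun hF 1))
  · simp only [Fin.sum_univ_two, cons_val_zero, cons_val_one]
    rw [← Matrix.mul_assoc, ← Matrix.mul_assoc, ← Matrix.add_mul, hcomb, Matrix.zero_mul]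

/-- for any signal `f` and constant matrices `A, B`, the signals
`A·f` and `B·f` are linearly dependent. -/
theorem stmt_5 {N : ℕ} (hN : 1 ≤ N) (a b : EReal) (hab : a < b)
    (f : ℝ → Matrix (Fin N) (Fin N) ℂ) (hf : IsSignal a b f)
    (A B : Matrix (Fin N) (Fin N) ℂ) :
    ¬ LinIndep a b ![fun t => A * f t, fun t => B * f t] :=
  stmt_5_general hN a b f A B

end
end

section
/- Let S_1, …, S_p be a partition of the index set {1, 2, …, K} into nonempty sets. For each i = 1, …, p, let G_{k} ∈ ℂ^{N×N} for k ∈ S_i be constant matrices at least one of which is invertible. If matrix-valued signals f_1, …, f_K in L²(a,b; ℂ^{N×N}) are linearly independent, then the p matrix-valued signals h_i := ∑_{k ∈ S_i} G_k f_k, i = 1, …, p, are linearly independent. -/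
open MeasureTheory Matrix
open scoped ComplexOrder

noncomputable section

/-!
A combination `∑ᵢ Hᵢ hᵢ` of the block signals is the combination `∑ₖ (H_{i(k)} G_k) f_k` of the
original signals, where `i(k)` is the block containing `k`. If it is degenerate, linear
independence of the `f_k` puts the null space of its Gram matrix inside that of
`(Hᵢ G_k)ᴴ = G_kᴴ Hᵢᴴ`, and choosing `k ∈ Sᵢ` with `G_k` invertible leaves that of `Hᵢᴴ`.
-/

theorem Finset.exists_index_of_disjoint_of_cover {ι κ : Type*} (S : κ → Finset ι)
    (hdisj : ∀ i j, i ≠ j → Disjoint (S i) (S j)) (hcover : ∀ k, ∃ i, k ∈ S i) :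
    ∃ idx : ι → κ, ∀ j k, k ∈ S j ↔ idx k = j := by
  choose idx hidx using hcover
  refine ⟨idx, fun j k => ⟨fun hk => ?_, fun h => h ▸ hidx k⟩⟩
  by_contra hne
  exact Finset.disjoint_left.mp (hdisj _ _ hne) (hidx k) hk

theorem Finset.sum_mul_sum_fiber_eq_sum {ι κ R : Type*} [Fintype ι] [Fintype κ] [Semiring R]
    (S : κ → Finset ι) (idx : ι → κ) (hS : ∀ j k, k ∈ S j ↔ idx k = j)
    (H : κ → R) (G x : ι → R) :
    ∑ j, H j * ∑ k ∈ S j, G k * x k = ∑ k, H (idx k) * G k * x k := by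
  classical
  rw [← Finset.sum_fiberwise Finset.univ idx]
  refine Finset.sum_congr rfl fun j _ => ?_
  have hSj : S j = Finset.univ.filter fun k => idx k = j := by ext k; simpa using hS j k
  rw [hSj, Finset.mul_sum]
  refine Finset.sum_congr rfl fun k hk => ?_
  rw [(Finset.mem_filter.mp hk).2, mul_assoc]

theorem Matrix.conjTranspose_mulVec_eq_zero_of_mul_isUnit {n R : Type*} [Fintype n]
    [DecidableEq n] [Semiring R] [StarRing R] {H G : Matrix n n R} (hG : IsUnit G)
    {u : n → R} (h : (H * G)ᴴ *ᵥ u = 0) : Hᴴ *ᵥ u = 0 :=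
  mulVec_injective_of_isUnit ((isUnit_conjTranspose G).mpr hG) <| by
    rwa [mulVec_mulVec, ← conjTranspose_mul, mulVec_zero]

theorem stmt_6_general {N K p : ℕ} (a b : EReal)
    (f : Fin K → ℝ → Matrix (Fin N) (Fin N) ℂ)
    (S : Fin p → Finset (Fin K))
    (hdisj : ∀ i j : Fin p, i ≠ j → Disjoint (S i) (S j))
    (hcover : ∀ k : Fin K, ∃ i : Fin p, k ∈ S i)
    (G : Fin K → Matrix (Fin N) (Fin N) ℂ)
    (hG : ∀ i : Fin p, ∃ k ∈ S i, IsUnit (G k))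
    (hli : LinIndep a b f) :
    LinIndep a b (fun i t => ∑ k ∈ S i, G k * f k t) := by
  intro H hdeg i u hu
  obtain ⟨idx, hidx⟩ := Finset.exists_index_of_disjoint_of_cover S hdisj hcover
  simp only [Finset.sum_mul_sum_fiber_eq_sum S idx hidx] at hdeg hu
  obtain ⟨k₀, hk₀, hGk₀⟩ := hG i
  have hker := hli (fun k => H (idx k) * G k) hdeg k₀ u hu
  rw [(hidx i k₀).mp hk₀] at hker
  exact conjTranspose_mulVec_eq_zero_of_mul_isUnit hGk₀ hker

/-- block linear combinations, over a partition of the index set,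
of linearly independent signals with at least one invertible coefficient in
each block are linearly independent. -/
theorem stmt_6 {N K p : ℕ} (a b : EReal) (hab : a < b)
    (f : Fin K → ℝ → Matrix (Fin N) (Fin N) ℂ) (hf : ∀ k, IsSignal a b (f k))
    (S : Fin p → Finset (Fin K))
    (hdisj : ∀ i j : Fin p, i ≠ j → Disjoint (S i) (S j))
    (hcover : ∀ k : Fin K, ∃ i : Fin p, k ∈ S i)
    (hne : ∀ i : Fin p, (S i).Nonempty)
    (G : Fin K → Matrix (Fin N) (Fin N) ℂ)
    (hG : ∀ i : Fin p, ∃ k ∈ S i, IsUnit (G k))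
    (hli : LinIndep a b f) :
    LinIndep a b (fun i t => ∑ k ∈ S i, G k * f k t) :=
  stmt_6_general a b f S hdisj hcover G hG hli

end
end

section
/- Let f_1, f_2 be linearly independent matrix-valued signals in L²(a,b; ℂ^{N×N}), let g_1 := ⟨f_1,f_1⟩^{-1/2} f_1, and let ĝ_2 := f_2 − ⟨f_2, g_1⟩ g_1. Then ĝ_2 is nondegenerate (⟨ĝ_2, ĝ_2⟩ is invertible) and ⟨ĝ_2, g_1⟩ = 0. -/
open MeasureTheory Matrix
open scoped ComplexOrder

noncomputable section

/-- The positive semidefinite square root of a positive semidefinite matrix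
(the former `Matrix.PosSemidef.sqrt`, spelled out with its old definition). -/
def psdSqrt {N : ℕ} {A : Matrix (Fin N) (Fin N) ℂ} (hA : A.PosSemidef) :
    Matrix (Fin N) (Fin N) ℂ :=
  (hA.isHermitian.eigenvectorUnitary : Matrix (Fin N) (Fin N) ℂ) *
    diagonal ((↑) ∘ (√·) ∘ hA.isHermitian.eigenvalues) *
    (star hA.isHermitian.eigenvectorUnitary : Matrix (Fin N) (Fin N) ℂ)

/-!
A combination `∑ Fₖ fₖ` of linearly independent signals with one invertible coefficient is
nondegenerate: a nonzero kernel vector of its Gram matrix would be killed by the invertible `Fₖ†`.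
Applied to `f₁ = 1·f₁ + 0·f₂` this makes `⟨f₁,f₁⟩` invertible, hence `⟨g₁,g₁⟩ = 1` and
`⟨ĝ₂,g₁⟩ = ⟨f₂,g₁⟩ - ⟨f₂,g₁⟩⟨g₁,g₁⟩ = 0`; applied to
`ĝ₂ = -⟨f₂,g₁⟩⟨f₁,f₁⟩^{-1/2} f₁ + 1·f₂` it gives the nondegeneracy of `ĝ₂`.
-/

section PsdSqrt

variable {N : ℕ} {A : Matrix (Fin N) (Fin N) ℂ}

lemma psdSqrt_mul_self (hA : A.PosSemidef) : psdSqrt hA * psdSqrt hA = A := by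
  have hU := Matrix.UnitaryGroup.star_mul_self hA.isHermitian.eigenvectorUnitary
  conv_rhs => rw [hA.isHermitian.spectral_theorem, Unitary.conjStarAlgAut_apply]
  simp only [psdSqrt]
  rw [show ∀ X Y Z W V : Matrix (Fin N) (Fin N) ℂ, X * Y * Z * (W * Y * V) = X * Y * (Z * W) * Y * V
    from fun X Y Z W V => by simp only [Matrix.mul_assoc]]
  rw [hU, Matrix.mul_one, Matrix.mul_assoc _ (diagonal _) (diagonal _), diagonal_mul_diagonal]
  congr 3
  funext i
  simp only [Function.comp_apply]
  rw [← Complex.ofReal_mul, Real.mul_self_sqrt (hA.eigenvalues_nonneg i)]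
  rfl

lemma isHermitian_psdSqrt (hA : A.PosSemidef) : (psdSqrt hA).IsHermitian := by
  simp only [Matrix.IsHermitian, psdSqrt, Matrix.conjTranspose_mul, Matrix.diagonal_conjTranspose,
    Matrix.mul_assoc, Matrix.star_eq_conjTranspose, Matrix.conjTranspose_conjTranspose]
  congr 3
  funext i
  simp

lemma isUnit_psdSqrt (hA : A.PosSemidef) (hunit : IsUnit A) : IsUnit (psdSqrt hA) :=
  isUnit_of_mul_isUnit_left ((psdSqrt_mul_self hA).symm ▸ hunit)

end PsdSqrt

section Signals

variable {N : ℕ} {a b : EReal} {f g h : ℝ → Matrix (Fin N) (Fin N) ℂ}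

lemma IsSignal.const_mul (hf : IsSignal a b f) (A : Matrix (Fin N) (Fin N) ℂ) :
    IsSignal a b (fun t => A * f t) := fun k l => by
  simp only [Matrix.mul_apply]
  exact memLp_finsetSum _ fun m _ => (hf m l).const_mul _

lemma IsSignal.sub (hf : IsSignal a b f) (hh : IsSignal a b h) :
    IsSignal a b (fun t => f t - h t) := fun k l => by
  simp only [Matrix.sub_apply]
  exact (hf k l).sub (hh k l)

lemma integrable_mul_conjTranspose_apply (hf : IsSignal a b f) (hg : IsSignal a b g)
    (k l : Fin N) :
    Integrable (fun t => (f t * (g t)ᴴ) k l) (volume.restrict (ival a b)) := by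
  simp only [Matrix.mul_apply, Matrix.conjTranspose_apply]
  exact integrable_finsetSum _ fun m _ => (hf k m).integrable_mul (hg l m).star

lemma mvInner_const_mul_left (A : Matrix (Fin N) (Fin N) ℂ) (hf : IsSignal a b f)
    (hg : IsSignal a b g) :
    mvInner a b (fun t => A * f t) g = A * mvInner a b f g := by
  ext k l
  simp only [mvInner, Matrix.of_apply, Matrix.mul_assoc, Matrix.mul_apply (M := A)]
  rw [integral_finsetSum _ fun m _ => (integrable_mul_conjTranspose_apply hf hg m l).const_mul _]
  simp_rw [integral_const_mul]

lemma mvInner_const_mul_right (B : Matrix (Fin N) (Fin N) ℂ) (hf : IsSignal a b f)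
    (hg : IsSignal a b g) :
    mvInner a b f (fun t => B * g t) = mvInner a b f g * Bᴴ := by
  ext k l
  simp only [mvInner, Matrix.of_apply, Matrix.conjTranspose_mul, ← Matrix.mul_assoc,
    Matrix.mul_apply (N := Bᴴ)]
  rw [integral_finsetSum _ fun m _ => (integrable_mul_conjTranspose_apply hf hg k m).mul_const _]
  simp_rw [integral_mul_const]

lemma mvInner_sub_left (hf : IsSignal a b f) (hh : IsSignal a b h) (hg : IsSignal a b g) :
    mvInner a b (fun t => f t - h t) g = mvInner a b f g - mvInner a b h g := by
  ext k l
  simp only [mvInner, Matrix.of_apply, Matrix.sub_apply, Matrix.sub_mul]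
  exact integral_sub (integrable_mul_conjTranspose_apply hf hg k l)
    (integrable_mul_conjTranspose_apply hh hg k l)

lemma mvInner_psdSqrt_inv_mul_self (hf : IsSignal a b f) (hpsd : (mvInner a b f f).PosSemidef)
    (hunit : IsUnit (mvInner a b f f)) :
    mvInner a b (fun t => (psdSqrt hpsd)⁻¹ * f t) (fun t => (psdSqrt hpsd)⁻¹ * f t) = 1 := by
  have hS := (Matrix.isUnit_iff_isUnit_det _).mp (isUnit_psdSqrt hpsd hunit)
  have hSS := psdSqrt_mul_self hpsd
  rw [mvInner_const_mul_left _ hf (hf.const_mul _), mvInner_const_mul_right _ hf hf,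
    Matrix.conjTranspose_nonsing_inv, (isHermitian_psdSqrt hpsd).eq]
  set S := psdSqrt hpsd
  rw [← hSS, Matrix.mul_assoc S, Matrix.mul_nonsing_inv _ hS, Matrix.mul_one,
    Matrix.nonsing_inv_mul _ hS]

lemma mvInner_sub_mvInner_mul_left_eq_zero (hf : IsSignal a b f) (hg : IsSignal a b g)
    (hgg : mvInner a b g g = 1) :
    mvInner a b (fun t => f t - mvInner a b f g * g t) g = 0 := by
  rw [mvInner_sub_left hf (hg.const_mul _) hg, mvInner_const_mul_left _ hg hg, hgg,
    Matrix.mul_one, sub_self]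

end Signals

lemma LinIndep.isUnit_mvInner {N K : ℕ} {a b : EReal} {f : Fin K → ℝ → Matrix (Fin N) (Fin N) ℂ}
    (hli : LinIndep a b f) (F : Fin K → Matrix (Fin N) (Fin N) ℂ) (k : Fin K)
    (hk : IsUnit (F k)) :
    IsUnit (mvInner a b (fun t => ∑ j, F j * f j t) (fun t => ∑ j, F j * f j t)) := by
  by_contra hG
  obtain ⟨u, hu, hGu⟩ := Matrix.exists_mulVec_eq_zero_iff.mpr <| by
    simpa [Matrix.isUnit_iff_isUnit_det] using hG
  have hinj : Function.Injective (F k)ᴴ.mulVec :=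
    Matrix.mulVec_injective_iff_isUnit.mpr (isUnit_star.mpr hk)
  exact hu (hinj (by rw [hli F hG k u hGu, Matrix.mulVec_zero]))

theorem stmt_9_general {N : ℕ} (a b : EReal)
    (f₁ f₂ : ℝ → Matrix (Fin N) (Fin N) ℂ)
    (hf₁ : IsSignal a b f₁) (hf₂ : IsSignal a b f₂)
    (hli : LinIndep a b ![f₁, f₂])
    (hpsd : (mvInner a b f₁ f₁).PosSemidef)
    (g₁ : ℝ → Matrix (Fin N) (Fin N) ℂ)
    (hg₁ : g₁ = fun t => (psdSqrt hpsd)⁻¹ * f₁ t)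
    (ghat₂ : ℝ → Matrix (Fin N) (Fin N) ℂ)
    (hghat₂ : ghat₂ = fun t => f₂ t - mvInner a b f₂ g₁ * g₁ t) :
    IsUnit (mvInner a b ghat₂ ghat₂) ∧ mvInner a b ghat₂ g₁ = 0 := by
  have hf₁_nondeg : IsUnit (mvInner a b f₁ f₁) := by
    simpa [Fin.sum_univ_two] using hli.isUnit_mvInner ![1, 0] 0 isUnit_one
  have hg₁g₁ : mvInner a b g₁ g₁ = 1 := hg₁ ▸ mvInner_psdSqrt_inv_mul_self hf₁ hpsd hf₁_nondeg
  have hg₁_sig : IsSignal a b g₁ := hg₁ ▸ hf₁.const_mul _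
  refine ⟨?_, hghat₂ ▸ mvInner_sub_mvInner_mul_left_eq_zero hf₂ hg₁_sig hg₁g₁⟩
  have hcomb : ghat₂ =
      fun t => ∑ j, ![-(mvInner a b f₂ g₁ * (psdSqrt hpsd)⁻¹), 1] j * ![f₁, f₂] j t := by
    simp [hghat₂, hg₁, Fin.sum_univ_two, Matrix.mul_assoc, sub_eq_neg_add]
  exact hcomb ▸ hli.isUnit_mvInner _ 1 isUnit_one

/-- first Gram-Schmidt step: `ghat₂ = f₂ − ⟨f₂,g₁⟩g₁` is
nondegenerate and orthogonal to `g₁ = ⟨f₁,f₁⟩^{-1/2} f₁`. -/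
theorem stmt_9 {N : ℕ} (a b : EReal) (hab : a < b)
    (f₁ f₂ : ℝ → Matrix (Fin N) (Fin N) ℂ)
    (hf₁ : IsSignal a b f₁) (hf₂ : IsSignal a b f₂)
    (hli : LinIndep a b ![f₁, f₂])
    (hpsd : (mvInner a b f₁ f₁).PosSemidef)
    (g₁ : ℝ → Matrix (Fin N) (Fin N) ℂ)
    (hg₁ : g₁ = fun t => (psdSqrt hpsd)⁻¹ * f₁ t)
    (ghat₂ : ℝ → Matrix (Fin N) (Fin N) ℂ)
    (hghat₂ : ghat₂ = fun t => f₂ t - mvInner a b f₂ g₁ * g₁ t) :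
    IsUnit (mvInner a b ghat₂ ghat₂) ∧ mvInner a b ghat₂ g₁ = 0 :=
  stmt_9_general a b f₁ f₂ hf₁ hf₂ hli hpsd g₁ hg₁ ghat₂ hghat₂

end
end
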